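/- arXiv:2212.03674 — 3 statements merged into one kernel-verified Lean document; each statement's English description precedes it below -/
import Mathlib

section
/- Let n, k ≥ 1 and m ≥ 2 be natural numbers, let β ∈ (0, 1/2], and set N := 2^{2n}. Let g be any function from ({0,1}^k)³ to the set of proper subsets of Fin m (subsets S ⊊ Fin m). Then the number of functions f : {0,1}^n × {0,1}^n → Fin m for which there exist functions f_A, f_B : {0,1}^n → {0,1}^k and λ ∈ {0,1}^k such that |{(x,y) : f(x,y) ∈ g(f_A(x), f_B(y), λ)}| ≥ (1−β)·N, is at most 2^{(2^{n+1}+1)·k} · (m−1)^{(1+β)·N} · 2^{h(β)·N}, where the right-hand side is interpreted via real exponentiation. -/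
open BigOperators

noncomputable section

/-- Binary entropy function with logarithm in base 2. -/
def binEntropy2 (p : ℝ) : ℝ := -p * Real.logb 2 p - (1 - p) * Real.logb 2 (1 - p)

lemma count_bound' {X : Type*} [Fintype X] [DecidableEq X] (m : ℕ)
    (G : X → Finset (Fin m)) (hG : ∀ p, ((G p).card : ℝ) ≤ (m : ℝ) - 1)
    (lam : ℝ) (hlam : 1 ≤ lam) (c : ℝ) :
    ((Finset.univ.filter fun f : X → Fin m =>
        c ≤ ((Finset.univ.filter fun p => f p ∈ G p).card : ℝ)).card : ℝ)
      ≤ lam ^ (-c) * (((m : ℝ) - 1) * lam + 1) ^ Fintype.card X := by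
  classical
  have hlam0 : 0 < lam := lt_of_lt_of_le one_pos hlam
  set good : (X → Fin m) → ℕ := fun f => (Finset.univ.filter fun p => f p ∈ G p).card with hgood
  have h1 : ((Finset.univ.filter fun f : X → Fin m => c ≤ ((good f : ℝ))).card : ℝ)
      ≤ ∑ f : X → Fin m, lam ^ ((good f : ℝ) - c) := by
    rw [Finset.card_filter]
    push_cast
    apply Finset.sum_le_sum
    intro f _
    by_cases hf : c ≤ ((good f : ℝ))
    · simp only [hf, if_true]
      exact Real.one_le_rpow hlam (by linarith)
    · simp only [hf, if_false]
      exact Real.rpow_nonneg hlam0.le _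
  have h2 : ∑ f : X → Fin m, lam ^ ((good f : ℝ) - c)
      = lam ^ (-c) * ∑ f : X → Fin m, lam ^ (good f) := by
    rw [Finset.mul_sum]
    apply Finset.sum_congr rfl
    intro f _
    rw [sub_eq_add_neg, add_comm, Real.rpow_add hlam0, ← Real.rpow_natCast lam (good f)]
  have h3 : ∑ f : X → Fin m, lam ^ (good f)
      = ∏ p : X, (((G p).card : ℝ) * lam + ((m : ℝ) - (G p).card)) := by
    have key : ∀ f : X → Fin m, lam ^ (good f) = ∏ p : X, (if f p ∈ G p then lam else 1) := by
      intro f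
      rw [Finset.prod_ite, Finset.prod_const, Finset.prod_const, one_pow, mul_one, hgood]
    simp_rw [key]
    rw [← Fintype.piFinset_univ, ← Finset.prod_univ_sum (fun _ : X => (Finset.univ : Finset (Fin m)))
      (fun p v => if v ∈ G p then lam else 1)]
    apply Finset.prod_congr rfl
    intro p _
    rw [Finset.sum_ite, Finset.sum_const, Finset.sum_const]
    simp only [nsmul_eq_mul, mul_one]
    have e1 : Finset.univ.filter (fun v : Fin m => v ∈ G p) = G p := by
      ext v; simp
    have e2 : (Finset.univ.filter (fun v : Fin m => ¬ v ∈ G p)).card = m - (G p).card := by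
      rw [Finset.filter_not, Finset.card_sdiff_of_subset]
      · simp [e1]
      · simp [e1]
    rw [e1, e2]
    have hle : (G p).card ≤ m := (Finset.card_le_card (Finset.subset_univ (G p))).trans_eq (by simp)
    push_cast [Nat.cast_sub hle]
    ring
  have h4 : ∏ p : X, (((G p).card : ℝ) * lam + ((m : ℝ) - (G p).card))
      ≤ (((m : ℝ) - 1) * lam + 1) ^ Fintype.card X := by
    rw [← Finset.card_univ, ← Finset.prod_const]
    apply Finset.prod_le_prod
    · intro p _
      have h0 : (0:ℝ) ≤ ((G p).card : ℝ) := Nat.cast_nonneg _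
      have hle : ((G p).card : ℝ) ≤ (m:ℝ) - 1 := hG p
      nlinarith
    · intro p _
      have hle : ((G p).card : ℝ) ≤ (m:ℝ) - 1 := hG p
      have h0 : (0:ℝ) ≤ ((G p).card : ℝ) := Nat.cast_nonneg _
      nlinarith
  calc ((Finset.univ.filter fun f : X → Fin m => c ≤ ((good f : ℝ))).card : ℝ)
      ≤ ∑ f : X → Fin m, lam ^ ((good f : ℝ) - c) := h1
    _ = lam ^ (-c) * ∑ f : X → Fin m, lam ^ (good f) := h2
    _ ≤ lam ^ (-c) * (((m : ℝ) - 1) * lam + 1) ^ Fintype.card X := by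
        apply mul_le_mul_of_nonneg_left (h3 ▸ h4) (Real.rpow_nonneg hlam0.le _)

lemma two_rpow_ent' (β Nr : ℝ) (hβ0 : 0 < β) (hβ1 : β < 1) :
    (2:ℝ) ^ (binEntropy2 β * Nr) = β ^ (-(β * Nr)) * (1 - β) ^ (-((1 - β) * Nr)) := by
  have h1β : (0:ℝ) < 1 - β := by linarith
  have e1 : (2:ℝ) ^ (Real.logb 2 β) = β := Real.rpow_logb two_pos (by norm_num) hβ0
  have e2 : (2:ℝ) ^ (Real.logb 2 (1-β)) = 1 - β := Real.rpow_logb two_pos (by norm_num) h1β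
  have : binEntropy2 β * Nr = Real.logb 2 β * (-(β * Nr)) + Real.logb 2 (1-β) * (-((1-β) * Nr)) := by
    unfold binEntropy2; ring
  rw [this, Real.rpow_add two_pos, Real.rpow_mul (by norm_num : (0:ℝ) ≤ 2),
    Real.rpow_mul (by norm_num : (0:ℝ) ≤ 2), e1, e2]

lemma algebra_bound' (β M Nr : ℝ) (hβ0 : 0 < β) (hβ1 : β ≤ 1/2) (hM : 1 ≤ M) (hN : 0 ≤ Nr) :
    ((1-β)/β) ^ (-((1-β)*Nr)) * (M * ((1-β)/β) + 1) ^ Nr ≤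
      M ^ ((1+β)*Nr) * (2:ℝ) ^ (binEntropy2 β * Nr) := by
  have h1β : (0:ℝ) < 1 - β := by linarith
  have hM0 : (0:ℝ) < M := lt_of_lt_of_le one_pos hM
  have key : M * ((1-β)/β) + 1 = (M * (1-β) + β) / β := by field_simp
  have hMB : (0:ℝ) < M * (1-β) + β := by nlinarith
  have lhs_eq : ((1-β)/β) ^ (-((1-β)*Nr)) * (M * ((1-β)/β) + 1) ^ Nr
      = (M * (1-β) + β) ^ Nr * (β ^ (-(β * Nr)) * (1-β) ^ (-((1-β)*Nr))) := by
    rw [key, Real.div_rpow h1β.le hβ0.le, Real.div_rpow hMB.le hβ0.le, div_mul_div_comm,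
      ← Real.rpow_add hβ0]
    have e : -((1-β)*Nr) + Nr = β*Nr := by ring
    rw [e, Real.rpow_neg hβ0.le (β*Nr), div_eq_mul_inv]
    ring
  have rhs_eq : M ^ ((1+β)*Nr) * (2:ℝ) ^ (binEntropy2 β * Nr)
      = M ^ ((1+β)*Nr) * (β ^ (-(β * Nr)) * (1-β) ^ (-((1-β)*Nr))) := by
    rw [two_rpow_ent' β Nr hβ0 (by linarith)]
  rw [lhs_eq, rhs_eq]
  apply mul_le_mul_of_nonneg_right _ (by positivity)
  have step1 : M * (1-β) + β ≤ M := by nlinarith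
  have step2 : M ≤ M ^ ((1:ℝ)+β) := by
    calc M = M ^ (1:ℝ) := (Real.rpow_one M).symm
      _ ≤ M ^ ((1:ℝ)+β) := Real.rpow_le_rpow_of_exponent_le hM (by linarith)
  calc (M * (1-β) + β) ^ Nr ≤ (M ^ ((1:ℝ)+β)) ^ Nr :=
        Real.rpow_le_rpow hMB.le (step1.trans step2) hN
    _ = M ^ ((1+β)*Nr) := by rw [← Real.rpow_mul hM0.le]

lemma cardT_eq (n k : ℕ) :
    Fintype.card (((Fin n → Bool) → (Fin k → Bool)) × ((Fin n → Bool) → (Fin k → Bool)) ×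
      (Fin k → Bool)) = 2 ^ ((2 ^ (n + 1) + 1) * k) := by
  rw [Fintype.card_prod, Fintype.card_prod, Fintype.card_fun, Fintype.card_fun,
    Fintype.card_fun, Fintype.card_bool, Fintype.card_fin, Fintype.card_fin]
  have he : (2 ^ (n + 1) + 1) * k = k * 2 ^ n + (k * 2 ^ n + k) := by
    rw [pow_succ]; ring
  rw [he, pow_add, pow_add, pow_mul]

/-- Counting bound: the number of functions f : {0,1}ⁿ × {0,1}ⁿ → [m] which agree with
a `classically rounded` function g on at least a (1−β)-fraction of all inputs is at
most 2^{(2^{n+1}+1)k} (m−1)^{(1+β)N} 2^{h(β)N}, with N = 2^{2n}. -/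
theorem counting_functions_bound (n k m : ℕ) (hn : 1 ≤ n) (hk : 1 ≤ k) (hm : 2 ≤ m)
    (β : ℝ) (hβ0 : 0 < β) (hβ1 : β ≤ 1 / 2)
    (g : (Fin k → Bool) → (Fin k → Bool) → (Fin k → Bool) → Finset (Fin m))
    (hg : ∀ a b c, g a b c ≠ Finset.univ) :
    (Nat.card {f : (Fin n → Bool) × (Fin n → Bool) → Fin m //
        ∃ fA fB : (Fin n → Bool) → (Fin k → Bool), ∃ lam : Fin k → Bool,
          (1 - β) * (2 : ℝ) ^ (2 * n) ≤
            ((Finset.univ.filter fun xy : (Fin n → Bool) × (Fin n → Bool) =>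
              f xy ∈ g (fA xy.1) (fB xy.2) lam).card : ℝ)} : ℝ) ≤
      (2 : ℝ) ^ ((2 ^ (n + 1) + 1) * k) *
        ((m : ℝ) - 1) ^ ((1 + β) * (2 : ℝ) ^ (2 * n)) *
        (2 : ℝ) ^ (binEntropy2 β * (2 : ℝ) ^ (2 * n)) := by
  classical
  have hβ1' : β < 1 := lt_of_le_of_lt hβ1 (by norm_num)
  have h1β : (0:ℝ) < 1 - β := by linarith
  set lam : ℝ := (1 - β) / β with hlamdef
  have hlam1 : 1 ≤ lam := by
    rw [hlamdef, le_div_iff₀ hβ0]; linarith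
  set c : ℝ := (1 - β) * (2 : ℝ) ^ (2 * n) with hcdef
  set M : ℝ := (m : ℝ) - 1 with hMdef
  have hM1 : 1 ≤ M := by
    rw [hMdef]
    have : (2:ℝ) ≤ (m:ℝ) := by exact_mod_cast hm
    linarith
  -- the triple type
  set T := (((Fin n → Bool) → (Fin k → Bool)) × ((Fin n → Bool) → (Fin k → Bool)) ×
    (Fin k → Bool)) with hT
  set P : ((Fin n → Bool) × (Fin n → Bool) → Fin m) → Prop := fun f =>
    ∃ fA fB : (Fin n → Bool) → (Fin k → Bool), ∃ lam' : Fin k → Bool,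
      c ≤ ((Finset.univ.filter fun xy : (Fin n → Bool) × (Fin n → Bool) =>
        f xy ∈ g (fA xy.1) (fB xy.2) lam').card : ℝ) with hP
  have hcard : (Nat.card {f : (Fin n → Bool) × (Fin n → Bool) → Fin m // P f} : ℝ)
      = ((Finset.univ.filter P).card : ℝ) := by
    rw [Nat.card_eq_fintype_card, Fintype.card_subtype]
  rw [show (Nat.card {f : (Fin n → Bool) × (Fin n → Bool) → Fin m //
        ∃ fA fB : (Fin n → Bool) → (Fin k → Bool), ∃ lam : Fin k → Bool,
          (1 - β) * (2 : ℝ) ^ (2 * n) ≤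
            ((Finset.univ.filter fun xy : (Fin n → Bool) × (Fin n → Bool) =>
              f xy ∈ g (fA xy.1) (fB xy.2) lam).card : ℝ)}) =
      Nat.card {f : (Fin n → Bool) × (Fin n → Bool) → Fin m // P f} from rfl]
  rw [hcard]
  -- cover by a union over triples
  have hsub : (Finset.univ.filter P) ⊆ Finset.univ.biUnion (fun t : T =>
      Finset.univ.filter fun f : (Fin n → Bool) × (Fin n → Bool) → Fin m =>
        c ≤ ((Finset.univ.filter fun xy : (Fin n → Bool) × (Fin n → Bool) =>
          f xy ∈ g (t.1 xy.1) (t.2.1 xy.2) t.2.2).card : ℝ)) := by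
    intro f hf
    simp only [hP, Finset.mem_filter, Finset.mem_univ, true_and] at hf
    obtain ⟨fA, fB, lam', h⟩ := hf
    apply Finset.mem_biUnion.mpr
    refine ⟨(fA, fB, lam'), Finset.mem_univ _, ?_⟩
    simp only [Finset.mem_filter, Finset.mem_univ, true_and]
    exact h
  have hstep1 : ((Finset.univ.filter P).card : ℝ) ≤
      ∑ t : T, ((Finset.univ.filter fun f : (Fin n → Bool) × (Fin n → Bool) → Fin m =>
        c ≤ ((Finset.univ.filter fun xy : (Fin n → Bool) × (Fin n → Bool) =>
          f xy ∈ g (t.1 xy.1) (t.2.1 xy.2) t.2.2).card : ℝ)).card : ℝ) := by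
    have := le_trans (Finset.card_le_card hsub) Finset.card_biUnion_le
    exact_mod_cast this
  -- per-triple bound
  have hper : ∀ t : T, ((Finset.univ.filter fun f : (Fin n → Bool) × (Fin n → Bool) → Fin m =>
      c ≤ ((Finset.univ.filter fun xy : (Fin n → Bool) × (Fin n → Bool) =>
        f xy ∈ g (t.1 xy.1) (t.2.1 xy.2) t.2.2).card : ℝ)).card : ℝ) ≤
      lam ^ (-c) * (M * lam + 1) ^
        Fintype.card ((Fin n → Bool) × (Fin n → Bool)) := by
    intro t
    have hG : ∀ p : (Fin n → Bool) × (Fin n → Bool),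
        (((g (t.1 p.1) (t.2.1 p.2) t.2.2).card : ℝ)) ≤ (m : ℝ) - 1 := by
      intro p
      have hne := hg (t.1 p.1) (t.2.1 p.2) t.2.2
      have hlt : (g (t.1 p.1) (t.2.1 p.2) t.2.2).card < m := by
        have hss : (g (t.1 p.1) (t.2.1 p.2) t.2.2) ⊂ Finset.univ :=
          (Finset.subset_univ _).ssubset_of_ne hne
        have := Finset.card_lt_card hss
        simpa using this
      have : (g (t.1 p.1) (t.2.1 p.2) t.2.2).card + 1 ≤ m := hlt
      have := (Nat.cast_le (α := ℝ)).mpr this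
      push_cast at this
      linarith
    have := count_bound' m (fun p : (Fin n → Bool) × (Fin n → Bool) =>
      g (t.1 p.1) (t.2.1 p.2) t.2.2) hG lam hlam1 c
    rw [hMdef]
    exact this
  have hstep2 : ((Finset.univ.filter P).card : ℝ) ≤
      (Fintype.card T : ℝ) * (lam ^ (-c) * (M * lam + 1) ^
        Fintype.card ((Fin n → Bool) × (Fin n → Bool))) := by
    calc ((Finset.univ.filter P).card : ℝ) ≤ _ := hstep1
      _ ≤ ∑ _t : T, (lam ^ (-c) * (M * lam + 1) ^
          Fintype.card ((Fin n → Bool) × (Fin n → Bool))) :=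
        Finset.sum_le_sum (fun t _ => hper t)
      _ = (Fintype.card T : ℝ) * _ := by
        rw [Finset.sum_const, Finset.card_univ, nsmul_eq_mul]
  -- compute cardinalities
  have hcardT : (Fintype.card T : ℝ) = (2 : ℝ) ^ ((2 ^ (n + 1) + 1) * k) := by
    have h1 : Fintype.card T = 2 ^ ((2 ^ (n + 1) + 1) * k) := cardT_eq n k
    rw [h1]
    push_cast
    ring
  have hcardX : Fintype.card ((Fin n → Bool) × (Fin n → Bool)) = 2 ^ (2 * n) := by
    rw [Fintype.card_prod, Fintype.card_fun, Fintype.card_bool, Fintype.card_fin,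
      two_mul, pow_add]
  have hNrcast : ((2 ^ (2 * n) : ℕ) : ℝ) = (2 : ℝ) ^ (2 * n) := by push_cast; ring
  -- convert npow to rpow and apply algebra bound
  have hMlam : (0:ℝ) ≤ M * lam + 1 := by
    have : (0:ℝ) < lam := lt_of_lt_of_le one_pos hlam1
    nlinarith
  have hpow : (M * lam + 1) ^ Fintype.card ((Fin n → Bool) × (Fin n → Bool))
      = (M * lam + 1) ^ ((2 : ℝ) ^ (2 * n)) := by
    rw [hcardX, ← hNrcast, Real.rpow_natCast]
  have halg : lam ^ (-c) * (M * lam + 1) ^ ((2 : ℝ) ^ (2 * n)) ≤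
      M ^ ((1 + β) * (2 : ℝ) ^ (2 * n)) *
        (2 : ℝ) ^ (binEntropy2 β * (2 : ℝ) ^ (2 * n)) := by
    have := algebra_bound' β M ((2 : ℝ) ^ (2 * n)) hβ0 hβ1 hM1 (by positivity)
    rw [hlamdef, hcdef]
    exact this
  calc ((Finset.univ.filter P).card : ℝ)
      ≤ (Fintype.card T : ℝ) * (lam ^ (-c) * (M * lam + 1) ^
          Fintype.card ((Fin n → Bool) × (Fin n → Bool))) := hstep2
    _ ≤ (Fintype.card T : ℝ) * (M ^ ((1 + β) * (2 : ℝ) ^ (2 * n)) *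
          (2 : ℝ) ^ (binEntropy2 β * (2 : ℝ) ^ (2 * n))) := by
        apply mul_le_mul_of_nonneg_left _ (Nat.cast_nonneg _)
        rw [hpow]
        exact halg
    _ = (2 : ℝ) ^ ((2 ^ (n + 1) + 1) * k) *
        ((m : ℝ) - 1) ^ ((1 + β) * (2 : ℝ) ^ (2 * n)) *
        (2 : ℝ) ^ (binEntropy2 β * (2 : ℝ) ^ (2 * n)) := by
        rw [hcardT, hMdef, mul_assoc]

end
end

section
/- Let Δ = 0.013, let η ∈ (0.509, 1], let n, q, k be natural numbers with n ≥ 10, 2q ≤ n − 10, and k ≤ log₂(⌈4/(2^{2/3}·(η·Δ + 2)^{1/3} − 2)⌉)·2^{2q+2}. Then for every function g : ({0,1}^k)³ → {0,1}, the number of functions f : {0,1}^n × {0,1}^n → {0,1} for which there exist f_A, f_B : {0,1}^n → {0,1}^k and λ ∈ {0,1}^k with |{(x,y) : f(x,y) = g(f_A(x), f_B(y), λ)}| ≥ (3/4)·2^{2n}, is strictly less than 2^{−2^n} · 2^{2^{2n}}. Equivalently, a uniformly random f : {0,1}^n × {0,1}^n → {0,1} satisfies, with probability greater than 1 − 2^{−2^n},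 that for all f_A, f_B, λ the equality f(x,y) = g(f_A(x), f_B(y), λ) holds on fewer than 3/4 of all pairs (x,y). -/
open BigOperators

noncomputable section

/-!
Union bound over the `2 ^ (k * (2 * 2 ^ n + 1))` triples `(f_A, f_B, λ)`: a function `f` that
agrees with `(x, y) ↦ g (f_A x) (f_B y) λ` on `3/4` of the `N = 2 ^ (2 * n)` pairs lies in the
Hamming ball of radius `N / 4` around it. Weighting each point of `Bool ^ N` by `t ^ d`, `d` its
distance to the centre, bounds that ball by `(1 + t) ^ N / t ^ (N / 4)`; at `t = 1/3` this is at
most `2 ^ (13 * N / 16)`, because `2 ^ 32 ≤ 2 ^ 13 * 3 ^ 12`. The condition on `η` makes the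
ceiling at most `2 ^ 11`, so `k ≤ 11 * 2 ^ (n - 8)`, and the total exponent
`k * (2 * 2 ^ n + 1) + 13 * N / 16` stays below `N - 2 ^ n`.
-/

open Finset

section HammingBall

variable {α β : Type*} [Fintype α] [DecidableEq β]

theorem hammingDist_le_of_card_sub_le_card_filter_eq {f h : α → β} {m : ℕ}
    (hagree : (Fintype.card α : ℝ) - m ≤ #{x | f x = h x}) : hammingDist f h ≤ m := by
  have hsum : #{x | f x = h x} + hammingDist f h = Fintype.card α := by
    rw [hammingDist, card_filter_add_card_filter_not, card_univ]
  have : (hammingDist f h : ℝ) ≤ m := by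
    rw [← Nat.cast_inj (R := ℝ), Nat.cast_add] at hsum
    linarith
  exact_mod_cast this

variable [DecidableEq α] [Fintype β]

theorem sum_pow_hammingDist (h : α → β) (t : ℝ) :
    ∑ f : α → β, t ^ hammingDist f h = (((Fintype.card β : ℝ) - 1) * t + 1) ^ Fintype.card α := by
  have hterm (f : α → β) : t ^ hammingDist f h = ∏ x, if f x ≠ h x then t else 1 := by
    rw [← prod_filter, prod_const, hammingDist]
  have hfiber (c : β) :
      ∑ b : β, (if b ≠ c then t else 1) = ((Fintype.card β : ℝ) - 1) * t + 1 := by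
    simp only [sum_ite, sum_const, filter_ne', not_not, filter_eq', mem_univ, card_erase_of_mem,
      if_true, card_singleton, card_univ, nsmul_eq_mul, mul_one]
    rw [Nat.cast_pred (Fintype.card_pos_iff.mpr ⟨c⟩), Nat.cast_one, add_comm]
  simp_rw [hterm]
  rw [← Fintype.prod_sum (fun x b => if b ≠ h x then t else 1)]
  simp_rw [hfiber, prod_const, card_univ]

theorem card_hammingBall_le (h : α → β) (m : ℕ) {t : ℝ} (ht₀ : 0 < t) (ht₁ : t ≤ 1) :
    (#{f | hammingDist f h ≤ m} : ℝ) ≤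
      (((Fintype.card β : ℝ) - 1) * t + 1) ^ Fintype.card α / t ^ m := by
  rw [le_div_iff₀ (pow_pos ht₀ m), ← sum_pow_hammingDist h t, card_eq_sum_ones, Nat.cast_sum,
    Nat.cast_one, sum_mul, one_mul]
  calc ∑ f ∈ univ.filter (fun f => hammingDist f h ≤ m), t ^ m
      ≤ ∑ f ∈ univ.filter (fun f => hammingDist f h ≤ m), t ^ hammingDist f h :=
        sum_le_sum fun f hf => pow_le_pow_of_le_one ht₀.le ht₁ (mem_filter.mp hf).2
    _ ≤ ∑ f : α → β, t ^ hammingDist f h :=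
        sum_le_sum_of_subset_of_nonneg (filter_subset _ _) fun _ _ _ => by positivity

theorem card_exists_hammingDist_le_le {ι : Type*} [Fintype ι] (h : ι → α → β) (m : ℕ) {t : ℝ}
    (ht₀ : 0 < t) (ht₁ : t ≤ 1) :
    (Nat.card {f : α → β // ∃ i, hammingDist f (h i) ≤ m} : ℝ) ≤
      Fintype.card ι * ((((Fintype.card β : ℝ) - 1) * t + 1) ^ Fintype.card α / t ^ m) := by
  have hunion : {f : α → β | ∃ i, hammingDist f (h i) ≤ m} =
      ↑(univ.biUnion fun i => univ.filter fun f => hammingDist f (h i) ≤ m) := by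
    ext f; simp
  rw [← Set.coe_ofPred, hunion, Nat.card_coe_set_eq, Set.ncard_coe_finset, ← card_univ (α := ι),
    ← nsmul_eq_mul]
  exact (Nat.cast_le.mpr card_biUnion_le).trans <| by
    push_cast
    exact sum_le_card_nsmul _ _ _ fun i _ => card_hammingBall_le (h i) m ht₀ ht₁

end HammingBall

theorem card_exists_agree_ge_le {X Y K Λ : Type*} [Fintype X] [DecidableEq X] [Fintype Y]
    [DecidableEq Y] [Fintype K] [Fintype Λ] (g : K → K → Λ → Bool) (T : ℝ) (m : ℕ)
    (hT : (Fintype.card X * Fintype.card Y : ℝ) - m ≤ T) {t : ℝ} (ht₀ : 0 < t) (ht₁ : t ≤ 1) :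
    (Nat.card {f : X × Y → Bool // ∃ fA : X → K, ∃ fB : Y → K, ∃ lam : Λ,
        T ≤ (#{xy | f xy = g (fA xy.1) (fB xy.2) lam} : ℝ)} : ℝ) ≤
      Fintype.card K ^ Fintype.card X * (Fintype.card K ^ Fintype.card Y * Fintype.card Λ) *
        ((t + 1) ^ (Fintype.card X * Fintype.card Y) / t ^ m) := by
  let h (i : (X → K) × (Y → K) × Λ) (xy : X × Y) : Bool := g (i.1 xy.1) (i.2.1 xy.2) i.2.2
  calc _ ≤ (Nat.card {f // ∃ i, hammingDist f (h i) ≤ m} : ℝ) := by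
        refine Nat.cast_le.mpr (Nat.card_mono (Set.toFinite _) ?_)
        rintro f ⟨fA, fB, lam, hagree⟩
        refine ⟨(fA, fB, lam), hammingDist_le_of_card_sub_le_card_filter_eq ?_⟩
        rw [Fintype.card_prod]
        push_cast
        linarith
    _ ≤ _ := by
        refine (card_exists_hammingDist_le_le h m ht₀ ht₁).trans_eq ?_
        norm_num [Fintype.card_prod, Fintype.card_fun]

theorem four_thirds_pow_div_one_third_pow_le (j : ℕ) :
    (4 / 3 : ℝ) ^ (16 * j) / (1 / 3) ^ (4 * j) ≤ 2 ^ (13 * j) := by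
  rw [pow_mul, pow_mul, pow_mul, ← div_pow]
  gcongr
  norm_num

theorem logb_ceil_le_eleven {η : ℝ} (hη : 0.509 < η) :
    Real.logb 2 ((⌈4 / (2 ^ ((2 : ℝ) / 3) * (η * 0.013 + 2) ^ ((1 : ℝ) / 3) - 2)⌉ : ℤ) : ℝ)
      ≤ 11 := by
  set a := η * 0.013 + 2 with ha_def
  have ha : 0 ≤ a := by positivity
  have hroot : 2 ^ ((2 : ℝ) / 3) * a ^ ((1 : ℝ) / 3) = (4 * a) ^ ((3 : ℝ)⁻¹) := by
    rw [Real.mul_rpow (by norm_num) ha, div_eq_mul_inv, Real.rpow_mul zero_le_two, one_div]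
    norm_num
  have hd : 1 / 512 ≤ 2 ^ ((2 : ℝ) / 3) * a ^ ((1 : ℝ) / 3) - 2 := by
    have : (1025 / 512 : ℝ) ≤ (4 * a) ^ ((3 : ℝ)⁻¹) := by
      rw [Real.le_rpow_inv_iff_of_pos (by norm_num) (by positivity) (by norm_num)]
      norm_num
      linarith
    rw [hroot]
    linarith
  have hceil : ⌈4 / (2 ^ ((2 : ℝ) / 3) * a ^ ((1 : ℝ) / 3) - 2)⌉ ≤ 2 ^ 11 := by
    rw [Int.ceil_le, div_le_iff₀ (by linarith)]
    push_cast
    linarith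
  calc Real.logb 2 ((⌈4 / (2 ^ ((2 : ℝ) / 3) * a ^ ((1 : ℝ) / 3) - 2)⌉ : ℤ) : ℝ)
      ≤ Real.logb 2 (2 ^ 11) :=
        Real.logb_le_logb_of_le one_lt_two (by exact_mod_cast Int.ceil_pos.mpr (by positivity))
          (by exact_mod_cast hceil)
    _ = 11 := by rw [Real.logb_pow, Real.logb_self_eq_one one_lt_two]; norm_num

theorem le_eleven_mul_two_pow_of_le_logb_mul {η : ℝ} (hη : 0.509 < η) {n q k : ℕ} (hn : 10 ≤ n)
    (hq : 2 * q ≤ n - 10)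
    (hk : (k : ℝ) ≤
      Real.logb 2 ((⌈4 / (2 ^ ((2 : ℝ) / 3) * (η * 0.013 + 2) ^ ((1 : ℝ) / 3) - 2)⌉ : ℤ) : ℝ) *
        2 ^ (2 * q + 2)) :
    k ≤ 11 * 2 ^ (n - 8) := by
  have hkR : (k : ℝ) ≤ 11 * 2 ^ (2 * q + 2) :=
    hk.trans (mul_le_mul_of_nonneg_right (logb_ceil_le_eleven hη) (by positivity))
  exact (by exact_mod_cast hkR : k ≤ 11 * 2 ^ (2 * q + 2)).trans
    (Nat.mul_le_mul_left 11 (Nat.pow_le_pow_right two_pos (by omega)))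

/-- With `s = 2 ^ (n - 8)`: `256 * s = 2 ^ n` and `16 * (4096 * s ^ 2) = 2 ^ (2 * n)`. -/
theorem union_bound_exponent_lt {s k : ℕ} (hs : 1 ≤ s) (hk : k ≤ 11 * s) :
    k * (2 * (256 * s) + 1) + 13 * (4096 * s ^ 2) < (256 * s) ^ 2 - 256 * s := by
  have : 256 * s ≤ (256 * s) ^ 2 := by nlinarith
  rw [Nat.lt_sub_iff_add_lt]
  nlinarith

theorem two_rpow_neg_two_pow_mul_two_rpow_two_pow (n : ℕ) :
    (2 : ℝ) ^ (-((2 : ℝ) ^ n)) * (2 : ℝ) ^ ((2 : ℝ) ^ (2 * n)) = 2 ^ (2 ^ (2 * n) - 2 ^ n) := by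
  rw [← Real.rpow_add two_pos, ← Real.rpow_natCast 2 (2 ^ (2 * n) - 2 ^ n),
    Nat.cast_sub (Nat.pow_le_pow_right two_pos (by omega))]
  push_cast
  ring_nf

theorem counting_bound_bb84_general (Δ : ℝ) (hΔ : Δ = 0.013) (η : ℝ)
    (hη0 : 0.509 < η)
    (n q k : ℕ) (hn : 10 ≤ n) (hq : 2 * q ≤ n - 10)
    (hk : (k : ℝ) ≤
      Real.logb 2 ((⌈4 / (2 ^ ((2 : ℝ) / 3) * (η * Δ + 2) ^ ((1 : ℝ) / 3) - 2)⌉ : ℤ) : ℝ) *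
        2 ^ (2 * q + 2))
    (g : (Fin k → Bool) → (Fin k → Bool) → (Fin k → Bool) → Bool) :
    (Nat.card {f : (Fin n → Bool) × (Fin n → Bool) → Bool //
        ∃ fA fB : (Fin n → Bool) → (Fin k → Bool), ∃ lam : Fin k → Bool,
          (3 / 4 : ℝ) * (2 : ℝ) ^ (2 * n) ≤
            ((Finset.univ.filter fun xy : (Fin n → Bool) × (Fin n → Bool) =>
              f xy = g (fA xy.1) (fB xy.2) lam).card : ℝ)} : ℝ) <
      (2 : ℝ) ^ (-((2 : ℝ) ^ n)) * (2 : ℝ) ^ ((2 : ℝ) ^ (2 * n)) := by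
  subst hΔ
  set s := 2 ^ (n - 8)
  have hM : 2 ^ n = 256 * s := by rw [← pow_sub_mul_pow 2 (by omega : 8 ≤ n)]; ring
  have hks : k ≤ 11 * s := le_eleven_mul_two_pow_of_le_logb_mul hη0 hn hq hk
  set j := 4096 * s ^ 2
  have hN : (2 : ℝ) ^ (2 * n) = 16 * j := by rw [pow_mul']; exact_mod_cast (by rw [hM]; ring)
  have hball := card_exists_agree_ge_le (X := Fin n → Bool) (Y := Fin n → Bool) g
    ((3 / 4 : ℝ) * 2 ^ (2 * n)) (4 * j) (t := 1 / 3) (by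
      simp only [Fintype.card_fun, Fintype.card_bool, Fintype.card_fin]
      push_cast
      rw [← pow_add, ← two_mul, hN]
      linarith) (by norm_num) (by norm_num)
  calc (_ : ℝ) ≤ 2 ^ (k * (2 * (256 * s) + 1)) * ((4 / 3 : ℝ) ^ (16 * j) / (1 / 3) ^ (4 * j)) := by
        refine hball.trans_eq ?_
        simp only [Fintype.card_fun, Fintype.card_bool, Fintype.card_fin, hM,
          show 256 * s * (256 * s) = 16 * j by ring]
        push_cast
        ring_nf
    _ ≤ 2 ^ (k * (2 * (256 * s) + 1)) * 2 ^ (13 * j) := by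
        gcongr; exact four_thirds_pow_div_one_third_pow_le j
    _ < 2 ^ (2 ^ (2 * n) - 2 ^ n) := by
        rw [← pow_add, pow_mul', hM]
        exact pow_lt_pow_right₀ one_lt_two (union_bound_exponent_lt Nat.one_le_two_pow hks)
    _ = _ := (two_rpow_neg_two_pow_mul_two_rpow_two_pow n).symm

/-- For Δ = 0.013, η ∈ (0.509, 1], n ≥ 10, 2q ≤ n − 10 and
k ≤ log₂(⌈4/(2^{2/3}(ηΔ+2)^{1/3} − 2)⌉)·2^{2q+2}, for any g the number of functions
f : {0,1}ⁿ × {0,1}ⁿ → {0,1} admitting f_A, f_B, λ with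
f(x,y) = g(f_A(x), f_B(y), λ) on at least 3/4 of all pairs is < 2^{−2ⁿ}·2^{2^{2n}}. -/
theorem counting_bound_bb84 (Δ : ℝ) (hΔ : Δ = 0.013) (η : ℝ)
    (hη0 : 0.509 < η) (hη1 : η ≤ 1)
    (n q k : ℕ) (hn : 10 ≤ n) (hq : 2 * q ≤ n - 10)
    (hk : (k : ℝ) ≤
      Real.logb 2 ((⌈4 / (2 ^ ((2 : ℝ) / 3) * (η * Δ + 2) ^ ((1 : ℝ) / 3) - 2)⌉ : ℤ) : ℝ) *
        2 ^ (2 * q + 2))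
    (g : (Fin k → Bool) → (Fin k → Bool) → (Fin k → Bool) → Bool) :
    (Nat.card {f : (Fin n → Bool) × (Fin n → Bool) → Bool //
        ∃ fA fB : (Fin n → Bool) → (Fin k → Bool), ∃ lam : Fin k → Bool,
          (3 / 4 : ℝ) * (2 : ℝ) ^ (2 * n) ≤
            ((Finset.univ.filter fun xy : (Fin n → Bool) × (Fin n → Bool) =>
              f xy = g (fA xy.1) (fB xy.2) lam).card : ℝ)} : ℝ) <
      (2 : ℝ) ^ (-((2 : ℝ) ^ n)) * (2 : ℝ) ^ ((2 : ℝ) ^ (2 * n)) :=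
  counting_bound_bb84_general Δ hΔ η hη0 n q k hn hq hk g

end
end

section
/- Fix d_A, d_B ≥ 1, a unit vector ψ ∈ ℂ² ⊗ ℂ^{d_A} ⊗ ℂ^{d_B}, and p_err ≥ 0. Let V_0, V_1 and V'_0, V'_1 be two pairs of orthogonal projections on ℂ² with V_0 + V_1 = I and V'_0 + V'_1 = I. Let {A_a}_{a∈{0,1,⊥}}, {A'_a}_{a∈{0,1,⊥}} be POVMs on ℂ^{d_A} and {B_a}_{a∈{0,1,⊥}}, {B'_a}_{a∈{0,1,⊥}} POVMs on ℂ^{d_B}. Assume: (i) ⟨I·A_a·B_b⟩_ψ = 0 and ⟨I·A'_a·B'_b⟩_ψ = 0 for all a ≠ b in {0,1,⊥}; (ii) ⟨V_1·A_0·B_0⟩_ψ ≤ p_err·⟨V_1·(A_0+A_1)·(B_0+B_1)⟩_ψ and ⟨V_0·A_1·B_1⟩_ψ ≤ p_err·⟨V_0·(A_0+A_1)·(B_0+B_1)⟩_ψ, and the same two inequalities with (V', A', B') in place of (V, A, B). Then Σ_{a,b∈{0,1}} (2 − ‖V_a + V'_b‖_op)·⟨I·A_a·B'_b⟩_ψ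 ≤ p_err·( Σ_{a∈{0,1}} ⟨I·A_a·B_a⟩_ψ + Σ_{a∈{0,1}} ⟨I·A'_a·B'_a⟩_ψ ). -/
/-!
Since `V a + V' b ≤ ‖V a + V' b‖ • 1`, the weight `2 - ‖V a + V' b‖` is dominated by
`V (1 - a) + V' (1 - b)`, so the left side is at most
`∑ a b, ⟨V (1-a)·A a·B' b⟩ + ⟨V' (1-b)·A a·B' b⟩`. In the first sum, `B' 0 + B' 1 ≤ 1`, and
`⟨W·A a·B b⟩ = 0` for `b ≠ a` and `0 ≤ W ≤ 1` (it lies between `0` and `⟨1·A a·B b⟩ = 0`), so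
`∑ b ⟨V (1-a)·A a·B' b⟩ ≤ ⟨V (1-a)·A a·1⟩ = ⟨V (1-a)·A a·B a⟩`. These are exactly the error terms,
bounded by `perr` times `⟨(V 0 + V 1)·(A 0 + A 1)·(B 0 + B 1)⟩ = ∑ a ⟨1·A a·B a⟩`. The second sum
is the same argument with the roles of the two parties exchanged.
-/

open Matrix Kronecker BigOperators
open scoped ComplexOrder

noncomputable section

/-- ⟨ψ, (V ⊗ A ⊗ B) ψ⟩ as a real number. -/
def exval {dA dB : ℕ} (χ : Fin 2 × Fin dA × Fin dB → ℂ)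
    (V : Matrix (Fin 2) (Fin 2) ℂ) (A : Matrix (Fin dA) (Fin dA) ℂ)
    (B : Matrix (Fin dB) (Fin dB) ℂ) : ℝ :=
  (star χ ⬝ᵥ (V ⊗ₖ (A ⊗ₖ B)).mulVec χ).re

/-- A POVM with outcomes {0, 1, ⊥} (⊥ encoded as the index 2): three positive
semidefinite matrices summing to the identity. -/
def IsPOVM {d : ℕ} (A : Fin 3 → Matrix (Fin d) (Fin d) ℂ) : Prop :=
  (∀ a, (A a).PosSemidef) ∧ A 0 + A 1 + A 2 = 1

/-- Operator (spectral) norm of a complex matrix. -/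
def opNorm {ι : Type*} [Fintype ι] [DecidableEq ι] (M : Matrix ι ι ℂ) : ℝ :=
  ‖Matrix.toEuclideanCLM (𝕜 := ℂ) M‖

open scoped MatrixOrder

theorem Matrix.star_comp_dotProduct_submatrix_mulVec_comp {α m n : Type*} [Fintype m]
    [Fintype n] [NonUnitalNonAssocSemiring α] [Star α] (M : Matrix m m α) (e : n ≃ m)
    (v : m → α) : star (v ∘ e) ⬝ᵥ M.submatrix e e *ᵥ (v ∘ e) = star v ⬝ᵥ M *ᵥ v :=
  Fintype.sum_equiv e _ _ fun _ => congrArg _ (Fintype.sum_equiv e _ _ fun _ => rfl)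

open scoped Matrix.Norms.L2Operator in
theorem Matrix.IsHermitian.le_opNorm_smul_one {n : Type*} [Fintype n] [DecidableEq n]
    {M : Matrix n n ℂ} (hM : M.IsHermitian) : M ≤ (opNorm M : ℂ) • 1 := by
  have := hM.isSelfAdjoint.le_algebraMap_norm_self
  rwa [Algebra.algebraMap_eq_smul_one, ← Complex.coe_smul] at this

theorem Fin.two_rev_eq_one_sub {R : Type*} [AddCommGroup R] [One R] {V : Fin 2 → R}
    (h : V 0 + V 1 = 1) (a : Fin 2) : V a.rev = 1 - V a := by
  fin_cases a
  exacts [eq_sub_of_add_eq' h, eq_sub_of_add_eq h]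

namespace IsPOVM

variable {d : ℕ} {A : Fin 3 → Matrix (Fin d) (Fin d) ℂ}

theorem nonneg (hA : IsPOVM A) (a : Fin 3) : 0 ≤ A a := (hA.1 a).nonneg

theorem add_le_one (hA : IsPOVM A) : A 0 + A 1 ≤ 1 := by
  rw [← hA.2]
  exact le_add_of_nonneg_right (hA.nonneg 2)

end IsPOVM

section exval

variable {dA dB : ℕ} (ψ : Fin 2 × Fin dA × Fin dB → ℂ)

theorem exval_add_left (V W : Matrix (Fin 2) (Fin 2) ℂ) (A : Matrix (Fin dA) (Fin dA) ℂ)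
    (B : Matrix (Fin dB) (Fin dB) ℂ) : exval ψ (V + W) A B = exval ψ V A B + exval ψ W A B := by
  rw [exval, add_kronecker, add_mulVec, dotProduct_add, Complex.add_re, exval, exval]

theorem exval_add_middle (V : Matrix (Fin 2) (Fin 2) ℂ) (A A' : Matrix (Fin dA) (Fin dA) ℂ)
    (B : Matrix (Fin dB) (Fin dB) ℂ) :
    exval ψ V (A + A') B = exval ψ V A B + exval ψ V A' B := by
  rw [exval, add_kronecker, kronecker_add, add_mulVec, dotProduct_add, Complex.add_re, exval,
    exval]

theorem exval_add_right (V : Matrix (Fin 2) (Fin 2) ℂ) (A : Matrix (Fin dA) (Fin dA) ℂ)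
    (B B' : Matrix (Fin dB) (Fin dB) ℂ) :
    exval ψ V A (B + B') = exval ψ V A B + exval ψ V A B' := by
  rw [exval, kronecker_add, kronecker_add, add_mulVec, dotProduct_add, Complex.add_re, exval,
    exval]

theorem exval_ofReal_smul_left (r : ℝ) (V : Matrix (Fin 2) (Fin 2) ℂ)
    (A : Matrix (Fin dA) (Fin dA) ℂ) (B : Matrix (Fin dB) (Fin dB) ℂ) :
    exval ψ ((r : ℂ) • V) A B = r * exval ψ V A B := by
  rw [exval, smul_kronecker, smul_mulVec, dotProduct_smul, smul_eq_mul, Complex.re_ofReal_mul,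
    exval]

theorem exval_swap (V : Matrix (Fin 2) (Fin 2) ℂ) (A : Matrix (Fin dA) (Fin dA) ℂ)
    (B : Matrix (Fin dB) (Fin dB) ℂ) :
    exval (ψ ∘ Prod.map id Prod.swap) V B A = exval ψ V A B := by
  let e : Fin 2 × Fin dB × Fin dA ≃ Fin 2 × Fin dA × Fin dB :=
    (Equiv.refl _).prodCongr (Equiv.prodComm _ _)
  have hM : V ⊗ₖ (B ⊗ₖ A) = (V ⊗ₖ (A ⊗ₖ B)).submatrix e e := by
    ext ⟨i, b, a⟩ ⟨j, b', a'⟩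
    simp [e, kroneckerMap_apply, mul_comm]
  rw [exval, exval, hM, ← star_comp_dotProduct_submatrix_mulVec_comp _ e]
  rfl

variable {V W : Matrix (Fin 2) (Fin 2) ℂ} {A : Matrix (Fin dA) (Fin dA) ℂ}
  {B : Matrix (Fin dB) (Fin dB) ℂ}

theorem exval_nonneg (hV : 0 ≤ V) (hA : 0 ≤ A) (hB : 0 ≤ B) : 0 ≤ exval ψ V A B :=
  (Complex.nonneg_iff.mp
    ((hV.posSemidef.kronecker (hA.posSemidef.kronecker hB.posSemidef)).dotProduct_mulVec_nonneg
      ψ)).1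

theorem exval_mono_left (hVW : V ≤ W) (hA : 0 ≤ A) (hB : 0 ≤ B) :
    exval ψ V A B ≤ exval ψ W A B := by
  have := exval_add_left ψ V (W - V) A B
  rw [add_sub_cancel] at this
  linarith [exval_nonneg ψ (sub_nonneg.mpr hVW) hA hB]

theorem exval_mono_right {B' : Matrix (Fin dB) (Fin dB) ℂ} (hBB' : B ≤ B') (hV : 0 ≤ V)
    (hA : 0 ≤ A) : exval ψ V A B ≤ exval ψ V A B' := by
  have := exval_add_right ψ V A B (B' - B)
  rw [add_sub_cancel] at this
  linarith [exval_nonneg ψ hV hA (sub_nonneg.mpr hBB')]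

theorem exval_eq_zero_of_exval_one_eq_zero (hV : 0 ≤ V) (hV1 : V ≤ 1) (hA : 0 ≤ A) (hB : 0 ≤ B)
    (h : exval ψ 1 A B = 0) : exval ψ V A B = 0 :=
  le_antisymm (h ▸ exval_mono_left ψ hV1 hA hB) (exval_nonneg ψ hV hA hB)

theorem exval_one_right_eq {C : Fin 3 → Matrix (Fin dB) (Fin dB) ℂ} (hC : C 0 + C 1 + C 2 = 1)
    {a : Fin 3} (h : ∀ b, b ≠ a → exval ψ V A (C b) = 0) : exval ψ V A 1 = exval ψ V A (C a) := by
  rw [← hC, exval_add_right, exval_add_right]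
  match a with
  | 0 => rw [h 1 (by decide), h 2 (by decide), add_zero, add_zero]
  | 1 => rw [h 0 (by decide), h 2 (by decide), zero_add, add_zero]
  | 2 => rw [h 0 (by decide), h 1 (by decide), zero_add, zero_add]

theorem two_sub_opNorm_mul_exval_le {P Q : Matrix (Fin 2) (Fin 2) ℂ} (hP : P.IsHermitian)
    (hQ : Q.IsHermitian) (hA : 0 ≤ A) (hB : 0 ≤ B) :
    (2 - opNorm (P + Q)) * exval ψ 1 A B ≤ exval ψ (1 - P) A B + exval ψ (1 - Q) A B := by
  have h : ((2 - opNorm (P + Q) : ℝ) : ℂ) • (1 : Matrix (Fin 2) (Fin 2) ℂ) ≤ 1 - P + (1 - Q) :=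
    calc _ = (1 + 1 : Matrix (Fin 2) (Fin 2) ℂ) - (opNorm (P + Q) : ℂ) • 1 := by
          rw [Complex.ofReal_sub, sub_smul, Complex.ofReal_ofNat, two_smul]
      _ ≤ 1 + 1 - (P + Q) := sub_le_sub_left (hP.add hQ).le_opNorm_smul_one _
      _ = 1 - P + (1 - Q) := by abel
  rw [← exval_ofReal_smul_left, ← exval_add_left]
  exact exval_mono_left ψ h hA hB

end exval

theorem sum_exval_rev_le {dA dB : ℕ} (ψ : Fin 2 × Fin dA × Fin dB → ℂ) (perr : ℝ)
    {V : Fin 2 → Matrix (Fin 2) (Fin 2) ℂ} (hV : ∀ a, 0 ≤ V a)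
    (hVsum : V 0 + V 1 = 1) {A : Fin 3 → Matrix (Fin dA) (Fin dA) ℂ}
    {B C : Fin 3 → Matrix (Fin dB) (Fin dB) ℂ} (hA : ∀ a, 0 ≤ A a) (hB : IsPOVM B)
    (hC : C 0 + C 1 ≤ 1) (hzero : ∀ a b : Fin 3, a ≠ b → exval ψ 1 (A a) (B b) = 0)
    (herr1 : exval ψ (V 1) (A 0) (B 0) ≤ perr * exval ψ (V 1) (A 0 + A 1) (B 0 + B 1))
    (herr2 : exval ψ (V 0) (A 1) (B 1) ≤ perr * exval ψ (V 0) (A 0 + A 1) (B 0 + B 1)) :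
    ∑ a : Fin 2, ∑ b : Fin 2, exval ψ (V a.rev) (A a.castSucc) (C b.castSucc) ≤
      perr * ∑ a : Fin 2, exval ψ 1 (A a.castSucc) (B a.castSucc) := by
  have hV1 (a : Fin 2) : V a ≤ 1 := by
    rw [← Fin.rev_rev a, Fin.two_rev_eq_one_sub hVsum]
    exact sub_le_self _ (hV _)
  have hrow (a : Fin 2) : ∑ b : Fin 2, exval ψ (V a.rev) (A a.castSucc) (C b.castSucc) ≤
      exval ψ (V a.rev) (A a.castSucc) (B a.castSucc) :=
    calc _ = exval ψ (V a.rev) (A a.castSucc) (C 0 + C 1) := by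
          rw [exval_add_right, Fin.sum_univ_two]; rfl
      _ ≤ exval ψ (V a.rev) (A a.castSucc) 1 := exval_mono_right ψ hC (hV _) (hA _)
      _ = _ := exval_one_right_eq ψ hB.2 fun b hb => exval_eq_zero_of_exval_one_eq_zero ψ
          (hV _) (hV1 _) (hA _) (hB.nonneg b) (hzero _ _ hb.symm)
  have hdiag : exval ψ 1 (A 0 + A 1) (B 0 + B 1) =
      ∑ a : Fin 2, exval ψ 1 (A a.castSucc) (B a.castSucc) := by
    rw [exval_add_middle, exval_add_right, exval_add_right, hzero 0 1 (by decide),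
      hzero 1 0 (by decide), Fin.sum_univ_two, add_zero, zero_add]
    rfl
  calc _ ≤ ∑ a : Fin 2, exval ψ (V a.rev) (A a.castSucc) (B a.castSucc) :=
        Finset.sum_le_sum fun a _ => hrow a
    _ = exval ψ (V 1) (A 0) (B 0) + exval ψ (V 0) (A 1) (B 1) := Fin.sum_univ_two _
    _ ≤ perr * exval ψ (V 1) (A 0 + A 1) (B 0 + B 1) +
        perr * exval ψ (V 0) (A 0 + A 1) (B 0 + B 1) := add_le_add herr1 herr2
    _ = _ := by rw [← mul_add, ← exval_add_left, add_comm, hVsum, hdiag]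

theorem perr_constraint_qpv_general {dA dB : ℕ}
    (ψ : Fin 2 × Fin dA × Fin dB → ℂ)
    (perr : ℝ)
    (V V' : Fin 2 → Matrix (Fin 2) (Fin 2) ℂ)
    (hVproj : ∀ a, (V a)ᴴ = V a ∧ V a * V a = V a)
    (hV'proj : ∀ a, (V' a)ᴴ = V' a ∧ V' a * V' a = V' a)
    (hVsum : V 0 + V 1 = 1) (hV'sum : V' 0 + V' 1 = 1)
    (A A' : Fin 3 → Matrix (Fin dA) (Fin dA) ℂ)
    (B B' : Fin 3 → Matrix (Fin dB) (Fin dB) ℂ)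
    (hA : IsPOVM A) (hA' : IsPOVM A') (hB : IsPOVM B) (hB' : IsPOVM B')
    (hzero : ∀ a b : Fin 3, a ≠ b → exval ψ 1 (A a) (B b) = 0)
    (hzero' : ∀ a b : Fin 3, a ≠ b → exval ψ 1 (A' a) (B' b) = 0)
    (herr1 : exval ψ (V 1) (A 0) (B 0) ≤
      perr * exval ψ (V 1) (A 0 + A 1) (B 0 + B 1))
    (herr2 : exval ψ (V 0) (A 1) (B 1) ≤
      perr * exval ψ (V 0) (A 0 + A 1) (B 0 + B 1))
    (herr1' : exval ψ (V' 1) (A' 0) (B' 0) ≤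
      perr * exval ψ (V' 1) (A' 0 + A' 1) (B' 0 + B' 1))
    (herr2' : exval ψ (V' 0) (A' 1) (B' 1) ≤
      perr * exval ψ (V' 0) (A' 0 + A' 1) (B' 0 + B' 1)) :
    ∑ a : Fin 2, ∑ b : Fin 2, (2 - opNorm (V a + V' b)) *
        exval ψ 1 (A a.castSucc) (B' b.castSucc) ≤
      perr * ((∑ a : Fin 2, exval ψ 1 (A a.castSucc) (B a.castSucc)) +
        ∑ a : Fin 2, exval ψ 1 (A' a.castSucc) (B' a.castSucc)) := by
  have hV (a : Fin 2) : 0 ≤ V a := IsStarProjection.nonneg ⟨(hVproj a).2, (hVproj a).1⟩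
  have hV' (a : Fin 2) : 0 ≤ V' a := IsStarProjection.nonneg ⟨(hV'proj a).2, (hV'proj a).1⟩
  let ψswap := ψ ∘ Prod.map id Prod.swap
  calc _ ≤ ∑ a : Fin 2, ∑ b : Fin 2, (exval ψ (V a.rev) (A a.castSucc) (B' b.castSucc) +
          exval ψ (V' b.rev) (A a.castSucc) (B' b.castSucc)) := by
        gcongr with a _ b _
        rw [Fin.two_rev_eq_one_sub hVsum, Fin.two_rev_eq_one_sub hV'sum]
        exact two_sub_opNorm_mul_exval_le ψ (hVproj a).1 (hV'proj b).1 (hA.nonneg _)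
          (hB'.nonneg _)
    _ = ∑ a : Fin 2, ∑ b : Fin 2, exval ψ (V a.rev) (A a.castSucc) (B' b.castSucc) +
        ∑ b : Fin 2, ∑ a : Fin 2, exval ψswap (V' b.rev) (B' b.castSucc) (A a.castSucc) := by
        simp only [Finset.sum_add_distrib, ψswap, exval_swap]
        exact congrArg _ Finset.sum_comm
    _ ≤ perr * ∑ a : Fin 2, exval ψ 1 (A a.castSucc) (B a.castSucc) +
        perr * ∑ a : Fin 2, exval ψswap 1 (B' a.castSucc) (A' a.castSucc) :=
        add_le_add (sum_exval_rev_le ψ perr hV hVsum hA.nonneg hB hB'.add_le_one hzero herr1 herr2)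
          (sum_exval_rev_le ψswap perr hV' hV'sum hB'.nonneg hA' hA.add_le_one
            (fun a b hab => by simpa only [ψswap, exval_swap] using hzero' b a hab.symm)
            (by simpa only [ψswap, exval_swap] using herr1')
            (by simpa only [ψswap, exval_swap] using herr2'))
    _ = _ := by simp only [ψswap, exval_swap, mul_add]

theorem perr_constraint_qpv {dA dB : ℕ} (hdA : 1 ≤ dA) (hdB : 1 ≤ dB)
    (ψ : Fin 2 × Fin dA × Fin dB → ℂ) (hψ : ∑ i, ‖ψ i‖ ^ 2 = 1)
    (perr : ℝ) (hperr : 0 ≤ perr)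
    (V V' : Fin 2 → Matrix (Fin 2) (Fin 2) ℂ)
    (hVproj : ∀ a, (V a)ᴴ = V a ∧ V a * V a = V a)
    (hV'proj : ∀ a, (V' a)ᴴ = V' a ∧ V' a * V' a = V' a)
    (hVsum : V 0 + V 1 = 1) (hV'sum : V' 0 + V' 1 = 1)
    (A A' : Fin 3 → Matrix (Fin dA) (Fin dA) ℂ)
    (B B' : Fin 3 → Matrix (Fin dB) (Fin dB) ℂ)
    (hA : IsPOVM A) (hA' : IsPOVM A') (hB : IsPOVM B) (hB' : IsPOVM B')
    (hzero : ∀ a b : Fin 3, a ≠ b → exval ψ 1 (A a) (B b) = 0)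
    (hzero' : ∀ a b : Fin 3, a ≠ b → exval ψ 1 (A' a) (B' b) = 0)
    (herr1 : exval ψ (V 1) (A 0) (B 0) ≤
      perr * exval ψ (V 1) (A 0 + A 1) (B 0 + B 1))
    (herr2 : exval ψ (V 0) (A 1) (B 1) ≤
      perr * exval ψ (V 0) (A 0 + A 1) (B 0 + B 1))
    (herr1' : exval ψ (V' 1) (A' 0) (B' 0) ≤
      perr * exval ψ (V' 1) (A' 0 + A' 1) (B' 0 + B' 1))
    (herr2' : exval ψ (V' 0) (A' 1) (B' 1) ≤
      perr * exval ψ (V' 0) (A' 0 + A' 1) (B' 0 + B' 1)) :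
    ∑ a : Fin 2, ∑ b : Fin 2, (2 - opNorm (V a + V' b)) *
        exval ψ 1 (A a.castSucc) (B' b.castSucc) ≤
      perr * ((∑ a : Fin 2, exval ψ 1 (A a.castSucc) (B a.castSucc)) +
        ∑ a : Fin 2, exval ψ 1 (A' a.castSucc) (B' a.castSucc)) :=
  perr_constraint_qpv_general ψ perr V V' hVproj hV'proj hVsum hV'sum A A' B B' hA hA' hB hB' hzero
    hzero' herr1 herr2 herr1' herr2'
end
end
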